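/- Let A_k = [[0,1],[−λ_k/m, −d/m]], B = [0; −1/m], with m, d, λ_k, λ_l > 0. Then the unique solution Q_{kl} of the Sylvester equation A_k Q_{kl} + Q_{kl} A_l^T + BB^T = 0 is Q_{kl} = (2d / (m(λ_k−λ_l)² + 2(λ_k+λ_l)d²)) · [[1, (λ_k−λ_l)/(2d)], [(λ_l−λ_k)/(2d), (λ_k+λ_l)/(2m)]]. -/

import Mathlib

open Matrix

set_option maxHeartbeats 1600000 in
/-- The unique solution of the Sylvester equation `A_k Q + Q A_lᵀ + BBᵀ = 0` for the
second-order machine model. -/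
theorem stmt7 (m d lk ll : ℝ) (hm : 0 < m) (hd : 0 < d) (hlk : 0 < lk) (hll : 0 < ll)
    (Ak Al : Matrix (Fin 2) (Fin 2) ℝ) (B : Fin 2 → ℝ)
    (hAk : Ak = !![0, 1; -lk / m, -d / m]) (hAl : Al = !![0, 1; -ll / m, -d / m])
    (hB : B = ![0, -1 / m])
    (Q : Matrix (Fin 2) (Fin 2) ℝ)
    (hQ : Q = (2 * d / (m * (lk - ll) ^ 2 + 2 * (lk + ll) * d ^ 2)) •
      !![1, (lk - ll) / (2 * d); (ll - lk) / (2 * d), (lk + ll) / (2 * m)]) :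
    (Ak * Q + Q * Alᵀ + Matrix.vecMulVec B B = 0) ∧
      ∀ Q' : Matrix (Fin 2) (Fin 2) ℝ,
        Ak * Q' + Q' * Alᵀ + Matrix.vecMulVec B B = 0 → Q' = Q := by
  have hm0 : m ≠ 0 := hm.ne'
  have hd0 : d ≠ 0 := hd.ne'
  have hK : 0 < m * (lk - ll) ^ 2 + 2 * (lk + ll) * d ^ 2 := by positivity
  have hK0 : m * (lk - ll) ^ 2 + 2 * (lk + ll) * d ^ 2 ≠ 0 := hK.ne'
  constructor
  · subst hAk hAl hB hQ
    ext i j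
    fin_cases i <;> fin_cases j <;>
simp only [Matrix.add_apply, Matrix.mul_apply, Matrix.vecMulVec_apply,
        Fin.sum_univ_two, Matrix.smul_apply, Matrix.transpose_apply,
        Matrix.cons_val', Matrix.cons_val_zero, Matrix.cons_val_one, Matrix.head_cons,
        Matrix.empty_val', Matrix.cons_val_fin_one, Matrix.head_fin_const,
        Matrix.zero_apply, smul_eq_mul, Matrix.of_apply, Fin.zero_eta, Fin.mk_one] <;>
      field_simp <;> ring
  · intro Q' hQ'
    have hQeq : Ak * Q + Q * Alᵀ + Matrix.vecMulVec B B = 0 := by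
      subst hAk hAl hB hQ
      ext i j
      fin_cases i <;> fin_cases j <;>
simp only [Matrix.add_apply, Matrix.mul_apply, Matrix.vecMulVec_apply,
        Fin.sum_univ_two, Matrix.smul_apply, Matrix.transpose_apply,
        Matrix.cons_val', Matrix.cons_val_zero, Matrix.cons_val_one, Matrix.head_cons,
        Matrix.empty_val', Matrix.cons_val_fin_one, Matrix.head_fin_const,
        Matrix.zero_apply, smul_eq_mul, Matrix.of_apply, Fin.zero_eta, Fin.mk_one] <;>
        field_simp <;> ring
    set D := Q' - Q with hD
    have hDeq : Ak * D + D * Alᵀ = 0 := by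
      have := sub_eq_zero.mpr (hQ'.trans hQeq.symm)
      calc Ak * D + D * Alᵀ
          = (Ak * Q' + Q' * Alᵀ + Matrix.vecMulVec B B)
            - (Ak * Q + Q * Alᵀ + Matrix.vecMulVec B B) := by
            simp [hD, Matrix.mul_sub, Matrix.sub_mul]; abel
        _ = 0 := by rw [hQ', hQeq, sub_zero]
    have e00 := congrFun (congrFun hDeq 0) 0
    have e01 := congrFun (congrFun hDeq 0) 1
    have e10 := congrFun (congrFun hDeq 1) 0
    have e11 := congrFun (congrFun hDeq 1) 1
    subst hAk hAl
    simp only [Matrix.add_apply, Matrix.mul_apply, Fin.sum_univ_two,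
      Matrix.transpose_apply, Matrix.cons_val', Matrix.cons_val_zero, Matrix.cons_val_one,
      Matrix.head_cons, Matrix.empty_val', Matrix.cons_val_fin_one, Matrix.head_fin_const,
      Matrix.zero_apply, Matrix.of_apply] at e00 e01 e10 e11
    set a := D 0 0; set b := D 0 1; set c := D 1 0; set e := D 1 1
    -- e00 : c + b = 0 (type varies); derive polynomial forms
    have E1 : c + b = 0 := by linarith [e00]
    have E2 : m * e - ll * a - d * b = 0 := by
      field_simp at e01
      have h : m * (m * e - ll * a - d * b) = 0 := by linear_combination m * e01
      exact (mul_eq_zero.mp h).resolve_left hm0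
    have E3 : -(lk * a) - d * c + m * e = 0 := by
      field_simp at e10
      have h : m * (-(lk * a) - d * c + m * e) = 0 := by linear_combination m * e10
      exact (mul_eq_zero.mp h).resolve_left hm0
    have E4 : -(lk * b) - ll * c - 2 * d * e = 0 := by
      field_simp at e11
      have h : m * (-(lk * b) - ll * c - 2 * d * e) = 0 := by linear_combination m * e11
      exact (mul_eq_zero.mp h).resolve_left hm0
    have hc' : c = -b := by linarith
    have heq : 2 * d * e = (ll - lk) * b := by rw [hc'] at E4; linarith
    have haeq : (lk - ll) * a = 2 * d * b := by rw [hc'] at E3; linarith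
    have key : b * (m * (lk - ll) ^ 2 + 2 * (lk + ll) * d ^ 2) = 0 := by
      linear_combination (-(2 * d * (lk - ll))) * E2 + (m * (lk - ll)) * heq
        + (-(2 * d * ll)) * haeq
    have hb : b = 0 := (mul_eq_zero.mp key).resolve_right hK0
    have hc : c = 0 := by rw [hc', hb, neg_zero]
    have he : e = 0 := by
      have h2 : d * e = 0 := by rw [hb] at heq; linarith
      exact (mul_eq_zero.mp h2).resolve_left hd0
    have ha : a = 0 := by
      have h2 : ll * a = 0 := by rw [hb, he] at E2; linarith
      exact (mul_eq_zero.mp h2).resolve_left hll.ne'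
    have hD0 : D = 0 := by
      ext i j; fin_cases i <;> fin_cases j <;> assumption
    exact sub_eq_zero.mp hD0
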